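/- There exist constants T̄ > 0 and C > 0, depending only on m, c and K, such that for all τ with |τ − t| ≤ T̄, all p ∈ ℝ³ and all i, j ∈ {1,2,3}, the second τ-derivative of the momentum derivative of the spatial characteristic satisfies |d²/dτ² ∂_{p_i} X_j(τ; t, x, p)| ≤ C c / (p⁰)². -/

import Mathlib

/-!
Write `β(P) = P / P⁰`, so that `Ẋ = c β(P)` and `Ṗ = F = -E(X) - β(P) × B(X)`. By symmetry of
mixed partials, `(Y, Z) = (∂ₚX, ∂ₚP)` solves the linearised system `Ẏ = c Dβ(P) Z`, `Ż = ∂ₚF`,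
whose coefficients are bounded by `4/m + 9K + 8K/(mc)` since `‖Dβ(P)‖ ≤ 4/P⁰ ≤ 4/(mc)`; Grönwall
then bounds `(Y, Z)`, which starts at `(0, eᵢ)`. As `‖Ṗ‖ ≤ 3K`, for `|τ - t| ≤ mc/(24K)` the
momentum moves by at most `mc/8`, which keeps `1/P⁰ ≤ 2/p⁰`; hence `‖Y‖ ≲ c |τ - t| / p⁰`. Finally
`Ÿ = c (Dβ(P) ∂ₚF + D²β(P)[F, Z])` with `‖Dβ‖ ≲ 1/P⁰` and `‖D²β‖ ≲ 1/(P⁰)²` gives `|Ÿⱼ| ≲ c/(p⁰)²`.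
-/

noncomputable section

/-- Euclidean inner product on ℝ³. -/
def dot3 (p q : Fin 3 → ℝ) : ℝ := ∑ i, p i * q i

section Analysis

variable {E F : Type*} [NormedAddCommGroup E] [NormedSpace ℝ E] [NormedAddCommGroup F]
  [NormedSpace ℝ F]

lemma abs_le_norm_pi {ι : Type*} [Fintype ι] (a : ι → ℝ) (k : ι) : |a k| ≤ ‖a‖ := by
  simpa using norm_le_pi_norm a k

lemma norm_pi_le_of_forall_abs_le {ι : Type*} [Fintype ι] {a : ι → ℝ} {r : ℝ} (hr : 0 ≤ r)
    (h : ∀ k, |a k| ≤ r) : ‖a‖ ≤ r :=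
  (pi_norm_le_iff_of_nonneg hr).2 fun k => by simpa using h k

lemma norm_smul_le_of_le {k A U : ℝ} {u : F} (hk : |k| ≤ A) (hu : ‖u‖ ≤ U) :
    ‖k • u‖ ≤ A * U := by
  rw [norm_smul, Real.norm_eq_abs]
  exact mul_le_mul hk hu (norm_nonneg _) ((abs_nonneg k).trans hk)

lemma DifferentiableAt.of_uncurry {f : ℝ → E → F} {s : ℝ} {y : E}
    (hf : DifferentiableAt ℝ (fun z : ℝ × E => f z.1 z.2) (s, y)) :
    DifferentiableAt ℝ (f s) y :=
  hf.comp y ((differentiableAt_const s).prodMk differentiableAt_id)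

lemma fderiv_apply_eq_of_hasDerivAt_line {f : E → F} {p v : E} {a : F}
    (hf : DifferentiableAt ℝ f p) (h : HasDerivAt (fun r : ℝ => f (p + r • v)) a 0) :
    fderiv ℝ f p v = a := by
  rw [← hf.lineDeriv_eq_fderiv]
  exact HasLineDerivAt.lineDeriv h

lemma fderiv_apply_prodMk_left {h : ℝ × E → F} {s : ℝ} {p : E}
    (hh : DifferentiableAt ℝ h (s, p)) (v : E) :
    fderiv ℝ (fun q => h (s, q)) p v = fderiv ℝ h (s, p) (0, v) := by
  have hsec : HasFDerivAt (fun q => h (s, q))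
      ((fderiv ℝ h (s, p)).comp (ContinuousLinearMap.inr ℝ ℝ E)) p :=
    hh.hasFDerivAt.comp p (hasFDerivAt_prodMk_right s p)
  rw [hsec.fderiv]
  rfl

lemma hasDerivAt_apply_prodMk_right {h : ℝ × E → F} {s : ℝ} {p : E}
    (hh : DifferentiableAt ℝ h (s, p)) :
    HasDerivAt (fun σ => h (σ, p)) (fderiv ℝ h (s, p) (1, 0)) s := by
  have hcurve : HasDerivAt (fun σ : ℝ => (σ, p)) ((1 : ℝ), (0 : E)) s :=
    (hasDerivAt_id s).prodMk (hasDerivAt_const s p)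
  exact hh.hasFDerivAt.comp_hasDerivAt s hcurve

/-- Symmetry of mixed partial derivatives: if `∂ₛ f = g`, then `∂ₛ (∂_q f) = ∂_q g`. -/
theorem hasDerivAt_fderiv_of_hasDerivAt {f g : ℝ × E → F} (hf : ContDiff ℝ 2 f)
    (hg : Differentiable ℝ g) (hfg : ∀ s q, HasDerivAt (fun σ => f (σ, q)) (g (s, q)) s)
    (σ : ℝ) (p v : E) :
    HasDerivAt (fun s => fderiv ℝ (fun q => f (s, q)) p v) (fderiv ℝ (fun q => g (σ, q)) p v)
      σ := by
  have hf1 : Differentiable ℝ f := hf.differentiable two_ne_zero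
  have hDf : Differentiable ℝ (fderiv ℝ f) :=
    (hf.fderiv_right (le_refl _)).differentiable one_ne_zero
  have hg_eq : g = fun u => fderiv ℝ f u (1, 0) := funext fun u =>
    (hfg u.1 u.2).unique (hasDerivAt_apply_prodMk_right (hf1 u))
  have hD2 : HasDerivAt (fun s => fderiv ℝ f (s, p) (0, v))
      (fderiv ℝ (fderiv ℝ f) (σ, p) (1, 0) (0, v)) σ :=
    (ContinuousLinearMap.apply ℝ F ((0 : ℝ), v)).hasFDerivAt.comp_hasDerivAt σ
      (hasDerivAt_apply_prodMk_right (hDf (σ, p)))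
  have hgv : fderiv ℝ g (σ, p) (0, v) = fderiv ℝ (fderiv ℝ f) (σ, p) (0, v) (1, 0) := by
    have happly : HasFDerivAt (fun u => fderiv ℝ f u (1, 0))
        ((ContinuousLinearMap.apply ℝ F ((1 : ℝ), (0 : E))).comp
          (fderiv ℝ (fderiv ℝ f) (σ, p))) (σ, p) :=
      (ContinuousLinearMap.apply ℝ F ((1 : ℝ), (0 : E))).hasFDerivAt.comp (σ, p)
        (hDf (σ, p)).hasFDerivAt
    rw [hg_eq, happly.fderiv]
    rfl
  rw [fderiv_apply_prodMk_left (hg (σ, p)), hgv,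
    ← hf.contDiffAt.isSymmSndFDerivAt (by simp) (1, 0) (0, v)]
  simpa only [fderiv_apply_prodMk_left (hf1 _)] using hD2

lemma norm_fderiv_apply_le_of_abs_partial_le {ι κ : Type*} [Fintype ι] [DecidableEq ι]
    [Fintype κ] {f : (ι → ℝ) → κ → ℝ} {y : ι → ℝ} {K : ℝ} (hK : 0 ≤ K)
    (hf : DifferentiableAt ℝ f y)
    (h : ∀ k j, |fderiv ℝ (fun y' => f y' k) y (Pi.single j 1)| ≤ K) (w : ι → ℝ) :
    ‖fderiv ℝ f y w‖ ≤ Fintype.card ι * K * ‖w‖ := by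
  refine norm_pi_le_of_forall_abs_le (by positivity) fun k => ?_
  have hw : w = ∑ j, w j • (Pi.single j 1 : ι → ℝ) := by
    conv_lhs => rw [← Finset.univ_sum_single w]
    simp [← Pi.single_smul]
  calc |fderiv ℝ f y w k| = |∑ j, w j * fderiv ℝ (fun y' => f y' k) y (Pi.single j 1)| := by
        rw [fderiv_apply hf k]
        conv_lhs => rw [hw]
        simp
    _ ≤ ∑ _j : ι, ‖w‖ * K := by
        refine (Finset.abs_sum_le_sum_abs _ _).trans (Finset.sum_le_sum fun j _ => ?_)
        rw [abs_mul]
        exact mul_le_mul (abs_le_norm_pi w j) (h k j) (abs_nonneg _) (norm_nonneg _)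
    _ = Fintype.card ι * K * ‖w‖ := by rw [Finset.sum_const, Finset.card_univ, nsmul_eq_mul]; ring

lemma norm_sub_le_of_norm_deriv_le {f f' : ℝ → F} {C t τ : ℝ}
    (hf : ∀ σ, HasDerivAt f (f' σ) σ) (hb : ∀ σ ∈ Set.uIcc t τ, ‖f' σ‖ ≤ C) :
    ‖f τ - f t‖ ≤ C * |τ - t| := by
  simpa [Real.norm_eq_abs] using Convex.norm_image_sub_le_of_norm_hasDerivWithin_le
    (fun σ _ => (hf σ).hasDerivWithinAt) hb (convex_uIcc t τ) Set.left_mem_uIcc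
    Set.right_mem_uIcc

lemma norm_le_mul_exp_of_norm_deriv_le {V V' : ℝ → F} {L : ℝ}
    (hV : ∀ σ, HasDerivAt V (V' σ) σ) (hb : ∀ σ, ‖V' σ‖ ≤ L * ‖V σ‖) (t τ : ℝ) :
    ‖V τ‖ ≤ ‖V t‖ * Real.exp (L * |τ - t|) := by
  have forward : ∀ (W W' : ℝ → F), (∀ σ, HasDerivAt W (W' σ) σ) →
      (∀ σ, ‖W' σ‖ ≤ L * ‖W σ‖) → ∀ u, t ≤ u → ‖W u‖ ≤ ‖W t‖ * Real.exp (L * (u - t)) := by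
    intro W W' hW hWb u hu
    have := norm_le_gronwallBound_of_norm_deriv_right_le (ε := 0)
      (fun σ _ => (hW σ).continuousAt.continuousWithinAt) (fun σ _ => (hW σ).hasDerivWithinAt)
      le_rfl (fun σ _ => by simpa using hWb σ) u ⟨hu, le_rfl⟩
    rwa [gronwallBound_ε0] at this
  rcases le_total t τ with h | h
  · simpa [abs_of_nonneg (sub_nonneg.2 h)] using forward V V' hV hb τ h
  · have hrefl : ∀ σ, HasDerivAt (fun s => V (2 * t - s)) (-V' (2 * t - σ)) σ := fun σ => by
      simpa [Function.comp_def] using (hV (2 * t - σ)).scomp σ ((hasDerivAt_id σ).const_sub (2 * t))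
    have := forward _ _ hrefl (fun σ => by simpa using hb (2 * t - σ)) (2 * t - τ) (by linarith)
    simpa [abs_of_nonpos (sub_nonpos.2 h), show 2 * t - (2 * t - τ) = τ by ring,
      show 2 * t - t = t by ring, show 2 * t - τ - t = -(τ - t) by ring] using this

end Analysis

section Vectors

lemma dot3_comm (a b : Fin 3 → ℝ) : dot3 a b = dot3 b a := by
  simp only [dot3, mul_comm]

lemma abs_dot3_le (a b : Fin 3 → ℝ) : |dot3 a b| ≤ 3 * (‖a‖ * ‖b‖) :=
  calc |dot3 a b| ≤ ∑ k, |a k * b k| := Finset.abs_sum_le_sum_abs _ _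
    _ ≤ ∑ _k : Fin 3, ‖a‖ * ‖b‖ := by
        gcongr with k
        rw [abs_mul]
        exact mul_le_mul (abs_le_norm_pi a k) (abs_le_norm_pi b k) (abs_nonneg _) (norm_nonneg _)
    _ = 3 * (‖a‖ * ‖b‖) := by simp

lemma crossProduct_apply_eq (a b : Fin 3 → ℝ) (k : Fin 3) :
    crossProduct a b k = a (k + 1) * b (k + 2) - a (k + 2) * b (k + 1) := by
  fin_cases k <;> simp [cross_apply]

lemma norm_crossProduct_le (a b : Fin 3 → ℝ) : ‖crossProduct a b‖ ≤ 2 * (‖a‖ * ‖b‖) := by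
  have hab : ∀ k l, |a k * b l| ≤ ‖a‖ * ‖b‖ := fun k l => by
    rw [abs_mul]
    exact mul_le_mul (abs_le_norm_pi a k) (abs_le_norm_pi b l) (abs_nonneg _) (norm_nonneg _)
  refine norm_pi_le_of_forall_abs_le (by positivity) fun k => ?_
  rw [crossProduct_apply_eq]
  linarith [abs_sub (a (k + 1) * b (k + 2)) (a (k + 2) * b (k + 1)), hab (k + 1) (k + 2),
    hab (k + 2) (k + 1)]

variable {a b : ℝ → Fin 3 → ℝ} {a' b' : Fin 3 → ℝ} {t : ℝ}

lemma HasDerivAt.dot3 (ha : HasDerivAt a a' t) (hb : HasDerivAt b b' t) :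
    HasDerivAt (fun s => dot3 (a s) (b s)) (dot3 a' (b t) + dot3 (a t) b') t := by
  have h := HasDerivAt.fun_sum (u := Finset.univ)
    fun k _ => (hasDerivAt_pi.1 ha k).fun_mul (hasDerivAt_pi.1 hb k)
  simpa only [_root_.dot3, Finset.sum_add_distrib] using h

lemma HasDerivAt.crossProduct (ha : HasDerivAt a a' t) (hb : HasDerivAt b b' t) :
    HasDerivAt (fun s => crossProduct (a s) (b s))
      (crossProduct a' (b t) + crossProduct (a t) b') t := by
  refine hasDerivAt_pi.2 fun k => ?_
  have hcomp := fun l => hasDerivAt_pi.1 ha l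
  have hcomp' := fun l => hasDerivAt_pi.1 hb l
  simp only [crossProduct_apply_eq, Pi.add_apply]
  convert ((hcomp (k + 1)).fun_mul (hcomp' (k + 2))).fun_sub
    ((hcomp (k + 2)).fun_mul (hcomp' (k + 1))) using 1
  ring

lemma Differentiable.crossProduct {E : Type*} [NormedAddCommGroup E] [NormedSpace ℝ E]
    {a b : E → Fin 3 → ℝ} (ha : Differentiable ℝ a) (hb : Differentiable ℝ b) :
    Differentiable ℝ (fun z => crossProduct (a z) (b z)) := by
  refine differentiable_pi.2 fun k => ?_
  simp only [crossProduct_apply_eq]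
  have hcomp := differentiable_pi.1 ha
  have hcomp' := differentiable_pi.1 hb
  fun_prop

end Vectors

section Momentum

variable {m c : ℝ}

def p0 (m c : ℝ) (v : Fin 3 → ℝ) : ℝ := Real.sqrt (m ^ 2 * c ^ 2 + dot3 v v)

def beta (m c : ℝ) (v : Fin 3 → ℝ) : Fin 3 → ℝ := (p0 m c v)⁻¹ • v

def dBeta (m c : ℝ) (v w : Fin 3 → ℝ) : Fin 3 → ℝ :=
  (p0 m c v)⁻¹ • w - ((p0 m c v)⁻¹ ^ 3 * dot3 v w) • v

def d2Beta (m c : ℝ) (v a b : Fin 3 → ℝ) : Fin 3 → ℝ :=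
  (3 * (p0 m c v)⁻¹ ^ 5 * dot3 v a * dot3 v b) • v
    - (p0 m c v)⁻¹ ^ 3 • (dot3 v a • b + dot3 v b • a + dot3 a b • v)

lemma dot3_self_nonneg (v : Fin 3 → ℝ) : 0 ≤ dot3 v v :=
  Finset.sum_nonneg fun k _ => mul_self_nonneg (v k)

lemma norm_le_p0 (v : Fin 3 → ℝ) : ‖v‖ ≤ p0 m c v := by
  refine norm_pi_le_of_forall_abs_le (Real.sqrt_nonneg _) fun k => Real.abs_le_sqrt ?_
  have hk : v k * v k ≤ dot3 v v :=
    Finset.single_le_sum (f := fun i => v i * v i) (fun i _ => mul_self_nonneg (v i))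
      (Finset.mem_univ k)
  nlinarith [sq_nonneg (m * c)]

lemma mul_le_p0 (v : Fin 3 → ℝ) : m * c ≤ p0 m c v :=
  Real.le_sqrt_of_sq_le (by nlinarith [dot3_self_nonneg v])

lemma p0_pos (hmc : 0 < m * c) (v : Fin 3 → ℝ) : 0 < p0 m c v :=
  hmc.trans_le (mul_le_p0 v)

lemma inv_p0_le (hmc : 0 < m * c) (v : Fin 3 → ℝ) : (p0 m c v)⁻¹ ≤ (m * c)⁻¹ :=
  inv_anti₀ hmc (mul_le_p0 v)

lemma inv_p0_mul_norm_le_one (hmc : 0 < m * c) (v : Fin 3 → ℝ) : (p0 m c v)⁻¹ * ‖v‖ ≤ 1 := by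
  rw [inv_mul_le_one₀ (p0_pos hmc v)]
  exact norm_le_p0 v

lemma norm_beta_le_one (hmc : 0 < m * c) (v : Fin 3 → ℝ) : ‖beta m c v‖ ≤ 1 := by
  rw [beta, norm_smul, Real.norm_of_nonneg (inv_pos.2 (p0_pos hmc v)).le]
  exact inv_p0_mul_norm_le_one hmc v

lemma norm_dBeta_le (hmc : 0 < m * c) (v w : Fin 3 → ℝ) :
    ‖dBeta m c v w‖ ≤ 4 * (p0 m c v)⁻¹ * ‖w‖ := by
  set s := (p0 m c v)⁻¹
  have hs : 0 < s := inv_pos.2 (p0_pos hmc v)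
  have hsv : s * ‖v‖ ≤ 1 := inv_p0_mul_norm_le_one hmc v
  have hdot : |s ^ 3 * dot3 v w| ≤ s ^ 3 * (3 * (‖v‖ * ‖w‖)) := by
    rw [abs_mul, abs_of_pos (pow_pos hs 3)]
    gcongr
    exact abs_dot3_le v w
  calc ‖dBeta m c v w‖ ≤ s * ‖w‖ + s ^ 3 * (3 * (‖v‖ * ‖w‖)) * ‖v‖ :=
        (norm_sub_le _ _).trans (add_le_add (norm_smul_le_of_le (abs_of_pos hs).le le_rfl)
          (norm_smul_le_of_le hdot le_rfl))
    _ = s * ‖w‖ * (1 + 3 * (s * ‖v‖) ^ 2) := by ring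
    _ ≤ s * ‖w‖ * (1 + 3 * 1) := by gcongr; exact pow_le_one₀ (by positivity) hsv
    _ = 4 * s * ‖w‖ := by ring

lemma norm_d2Beta_le (hmc : 0 < m * c) (v a b : Fin 3 → ℝ) :
    ‖d2Beta m c v a b‖ ≤ 36 * (p0 m c v)⁻¹ ^ 2 * (‖a‖ * ‖b‖) := by
  set s := (p0 m c v)⁻¹
  have hs : 0 < s := inv_pos.2 (p0_pos hmc v)
  have hsv : s * ‖v‖ ≤ 1 := inv_p0_mul_norm_le_one hmc v
  have hva := abs_dot3_le v a
  have hvb := abs_dot3_le v b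
  have hab := abs_dot3_le a b
  have hcoef : |3 * s ^ 5 * dot3 v a * dot3 v b|
      ≤ 3 * s ^ 5 * (3 * (‖v‖ * ‖a‖)) * (3 * (‖v‖ * ‖b‖)) := by
    rw [abs_mul, abs_mul, abs_mul, abs_of_pos (by positivity : (0 : ℝ) < 3),
      abs_of_pos (pow_pos hs 5)]
    gcongr
  have hsum : ‖dot3 v a • b + dot3 v b • a + dot3 a b • v‖
      ≤ 3 * (‖v‖ * ‖a‖) * ‖b‖ + 3 * (‖v‖ * ‖b‖) * ‖a‖ + 3 * (‖a‖ * ‖b‖) * ‖v‖ :=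
    (norm_add₃_le).trans (add_le_add_three (norm_smul_le_of_le hva le_rfl)
      (norm_smul_le_of_le hvb le_rfl) (norm_smul_le_of_le hab le_rfl))
  have hr : 0 ≤ s * ‖v‖ := by positivity
  calc ‖d2Beta m c v a b‖
      ≤ 3 * s ^ 5 * (3 * (‖v‖ * ‖a‖)) * (3 * (‖v‖ * ‖b‖)) * ‖v‖
        + s ^ 3 * (3 * (‖v‖ * ‖a‖) * ‖b‖ + 3 * (‖v‖ * ‖b‖) * ‖a‖ + 3 * (‖a‖ * ‖b‖) * ‖v‖) :=
        (norm_sub_le _ _).trans (add_le_add (norm_smul_le_of_le hcoef le_rfl)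
          (norm_smul_le_of_le (abs_of_pos (pow_pos hs 3)).le hsum))
    _ = s ^ 2 * (‖a‖ * ‖b‖) * (27 * (s * ‖v‖) ^ 3 + 9 * (s * ‖v‖)) := by ring
    _ ≤ s ^ 2 * (‖a‖ * ‖b‖) * (27 * 1 + 9 * 1) := by
        gcongr; exact pow_le_one₀ hr hsv
    _ = 36 * s ^ 2 * (‖a‖ * ‖b‖) := by ring

end Momentum

section MomentumCalculus

variable {m c : ℝ} {v w : ℝ → Fin 3 → ℝ} {v' w' : Fin 3 → ℝ} {t : ℝ}

lemma hasDerivAt_inv_p0 (hmc : 0 < m * c) (hv : HasDerivAt v v' t) :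
    HasDerivAt (fun s => (p0 m c (v s))⁻¹) (-((p0 m c (v t))⁻¹ ^ 3 * dot3 (v t) v')) t := by
  have hpos := p0_pos hmc (v t)
  have hsq : p0 m c (v t) ^ 2 = m ^ 2 * c ^ 2 + dot3 (v t) (v t) :=
    Real.sq_sqrt (by nlinarith [dot3_self_nonneg (v t)])
  have h := (((hv.dot3 hv).const_add (m ^ 2 * c ^ 2)).sqrt (by rw [← hsq]; positivity)).inv
    hpos.ne'
  refine h.congr_deriv ?_
  rw [dot3_comm v' (v t)]
  unfold p0 at *
  field_simp
  ring

lemma hasDerivAt_beta (hmc : 0 < m * c) (hv : HasDerivAt v v' t) :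
    HasDerivAt (fun s => beta m c (v s)) (dBeta m c (v t) v') t := by
  refine ((hasDerivAt_inv_p0 hmc hv).fun_smul hv).congr_deriv ?_
  simp only [dBeta]
  module

lemma hasDerivAt_dBeta (hmc : 0 < m * c) (hv : HasDerivAt v v' t) (hw : HasDerivAt w w' t) :
    HasDerivAt (fun s => dBeta m c (v s) (w s)) (dBeta m c (v t) w' + d2Beta m c (v t) v' (w t))
      t := by
  have hs := hasDerivAt_inv_p0 hmc hv
  refine ((hs.fun_smul hw).fun_sub
    (((hs.fun_pow 3).fun_mul (hv.dot3 hw)).fun_smul hv)).congr_deriv ?_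
  simp only [dBeta, d2Beta]
  module

lemma contDiff_inv_p0 (hmc : 0 < m * c) {n : WithTop ℕ∞} :
    ContDiff ℝ n (fun v => (p0 m c v)⁻¹) := by
  have hdot : ContDiff ℝ n (fun v : Fin 3 → ℝ => m ^ 2 * c ^ 2 + dot3 v v) := by
    unfold dot3; fun_prop
  refine (hdot.sqrt fun v => ?_).inv fun v => (p0_pos hmc v).ne'
  nlinarith [dot3_self_nonneg v, mul_pos hmc hmc]

lemma differentiable_beta (hmc : 0 < m * c) : Differentiable ℝ (beta m c) :=
  ((contDiff_inv_p0 hmc (n := 1)).differentiable one_ne_zero).smul differentiable_id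

end MomentumCalculus

section Window

variable {m c : ℝ}

lemma p0_le_two_mul_p0 (hmc : 0 < m * c) {v w : Fin 3 → ℝ} (h : ‖v - w‖ ≤ m * c / 8) :
    p0 m c w ≤ 2 * p0 m c v := by
  have hk : ∀ k, (w k) ^ 2 ≤ 2 * (v k) ^ 2 + 2 * (m * c / 8) ^ 2 := fun k => by
    have := abs_le.1 ((abs_le_norm_pi (v - w) k).trans h)
    simp only [Pi.sub_apply] at this
    nlinarith [sq_nonneg (2 * v k - w k), mul_nonneg (sub_nonneg.2 this.1) (sub_nonneg.2 this.2)]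
  have hsq : p0 m c v ^ 2 = m ^ 2 * c ^ 2 + dot3 v v :=
    Real.sq_sqrt (by nlinarith [dot3_self_nonneg v])
  refine Real.sqrt_le_iff.2 ⟨by positivity [(p0_pos hmc v).le], ?_⟩
  rw [mul_pow, hsq]
  simp only [dot3, Fin.sum_univ_three] at hk ⊢
  nlinarith [hk 0, hk 1, hk 2]

lemma inv_p0_le_two_mul_inv_p0 (hmc : 0 < m * c) {v w : Fin 3 → ℝ} (h : ‖v - w‖ ≤ m * c / 8) :
    (p0 m c v)⁻¹ ≤ 2 * (p0 m c w)⁻¹ := by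
  have hv := p0_pos hmc v
  rw [inv_le_iff_one_le_mul₀ hv]
  have := p0_le_two_mul_p0 hmc h
  have hw := p0_pos hmc w
  calc (1 : ℝ) = (p0 m c w)⁻¹ * p0 m c w := (inv_mul_cancel₀ hw.ne').symm
    _ ≤ (p0 m c w)⁻¹ * (2 * p0 m c v) := by gcongr
    _ = 2 * (p0 m c w)⁻¹ * p0 m c v := by ring

end Window

section LorentzForce

variable {m c K K' s r : ℝ} {E B : ℝ → (Fin 3 → ℝ) → Fin 3 → ℝ} {x q y z : Fin 3 → ℝ}

def lorentzForce (m c : ℝ) (E B : ℝ → (Fin 3 → ℝ) → Fin 3 → ℝ) (s : ℝ) (x q : Fin 3 → ℝ) :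
    Fin 3 → ℝ :=
  -(E s x) - crossProduct (beta m c q) (B s x)

def lorentzForceDeriv (m c : ℝ) (E B : ℝ → (Fin 3 → ℝ) → Fin 3 → ℝ) (s : ℝ)
    (x q y z : Fin 3 → ℝ) : Fin 3 → ℝ :=
  -(fderiv ℝ (E s) x y)
    - (crossProduct (dBeta m c q z) (B s x) + crossProduct (beta m c q) (fderiv ℝ (B s) x y))

lemma norm_lorentzForce_le (hmc : 0 < m * c) (hE : ‖E s x‖ ≤ K) (hB : ‖B s x‖ ≤ K) :
    ‖lorentzForce m c E B s x q‖ ≤ 3 * K := by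
  have hcross := norm_crossProduct_le (beta m c q) (B s x)
  have hbeta := norm_beta_le_one (m := m) (c := c) hmc q
  have : ‖beta m c q‖ * ‖B s x‖ ≤ K := by nlinarith [norm_nonneg (beta m c q), norm_nonneg (B s x)]
  calc ‖lorentzForce m c E B s x q‖ ≤ ‖E s x‖ + ‖crossProduct (beta m c q) (B s x)‖ := by
        rw [lorentzForce, sub_eq_add_neg]
        exact (norm_add_le _ _).trans_eq (by rw [norm_neg, norm_neg])
    _ ≤ 3 * K := by linarith

lemma norm_lorentzForceDeriv_le (hmc : 0 < m * c) (hB : ‖B s x‖ ≤ K)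
    (hDE : ‖fderiv ℝ (E s) x y‖ ≤ K' * ‖y‖) (hDB : ‖fderiv ℝ (B s) x y‖ ≤ K' * ‖y‖) :
    ‖lorentzForceDeriv m c E B s x q y z‖ ≤ 3 * K' * ‖y‖ + 8 * K * (p0 m c q)⁻¹ * ‖z‖ := by
  have h1 := norm_crossProduct_le (dBeta m c q z) (B s x)
  have h2 := norm_crossProduct_le (beta m c q) (fderiv ℝ (B s) x y)
  have hdB := norm_dBeta_le (m := m) (c := c) hmc q z
  have hbeta := norm_beta_le_one (m := m) (c := c) hmc q
  have h1' : ‖dBeta m c q z‖ * ‖B s x‖ ≤ 4 * (p0 m c q)⁻¹ * ‖z‖ * K :=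
    mul_le_mul hdB hB (norm_nonneg _) (by positivity [(p0_pos hmc q).le])
  have h2' : ‖beta m c q‖ * ‖fderiv ℝ (B s) x y‖ ≤ 1 * (K' * ‖y‖) :=
    mul_le_mul hbeta hDB (norm_nonneg _) zero_le_one
  calc ‖lorentzForceDeriv m c E B s x q y z‖
      ≤ ‖fderiv ℝ (E s) x y‖ + (‖crossProduct (dBeta m c q z) (B s x)‖
          + ‖crossProduct (beta m c q) (fderiv ℝ (B s) x y)‖) := by
        rw [lorentzForceDeriv, sub_eq_add_neg]
        refine (norm_add_le _ _).trans ?_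
        rw [norm_neg, norm_neg]
        gcongr
        exact norm_add_le _ _
    _ ≤ 3 * K' * ‖y‖ + 8 * K * (p0 m c q)⁻¹ * ‖z‖ := by linarith

lemma HasDerivAt.lorentzForce (hmc : 0 < m * c) {x q : ℝ → Fin 3 → ℝ}
    (hE : DifferentiableAt ℝ (E s) (x r)) (hB : DifferentiableAt ℝ (B s) (x r))
    (hx : HasDerivAt x y r) (hq : HasDerivAt q z r) :
    HasDerivAt (fun r => _root_.lorentzForce m c E B s (x r) (q r))
      (lorentzForceDeriv m c E B s (x r) (q r) y z) r :=
  (hE.hasFDerivAt.comp_hasDerivAt r hx).fun_neg.fun_sub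
    ((hasDerivAt_beta hmc hq).crossProduct (hB.hasFDerivAt.comp_hasDerivAt r hx))

end LorentzForce

structure IsCharacteristicFlow (m c : ℝ) (E B X P : ℝ → (Fin 3 → ℝ) → Fin 3 → ℝ) : Prop where
  differentiable_E : Differentiable ℝ (fun z : ℝ × (Fin 3 → ℝ) => E z.1 z.2)
  differentiable_B : Differentiable ℝ (fun z : ℝ × (Fin 3 → ℝ) => B z.1 z.2)
  contDiff_X : ContDiff ℝ 2 (fun z : ℝ × (Fin 3 → ℝ) => X z.1 z.2)
  contDiff_P : ContDiff ℝ 2 (fun z : ℝ × (Fin 3 → ℝ) => P z.1 z.2)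
  hasDerivAt_X : ∀ τ q, HasDerivAt (fun σ => X σ q) (c • beta m c (P τ q)) τ
  hasDerivAt_P : ∀ τ q, HasDerivAt (fun σ => P σ q) (lorentzForce m c E B τ (X τ q) (P τ q)) τ

namespace IsCharacteristicFlow

variable {m c : ℝ} {E B X P : ℝ → (Fin 3 → ℝ) → Fin 3 → ℝ}

lemma differentiableAt_X (h : IsCharacteristicFlow m c E B X P) (σ : ℝ) (p : Fin 3 → ℝ) :
    DifferentiableAt ℝ (X σ) p :=
  DifferentiableAt.of_uncurry (h.contDiff_X.differentiable two_ne_zero _)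

lemma differentiableAt_P (h : IsCharacteristicFlow m c E B X P) (σ : ℝ) (p : Fin 3 → ℝ) :
    DifferentiableAt ℝ (P σ) p :=
  DifferentiableAt.of_uncurry (h.contDiff_P.differentiable two_ne_zero _)

lemma differentiableAt_E (h : IsCharacteristicFlow m c E B X P) (σ : ℝ) (y : Fin 3 → ℝ) :
    DifferentiableAt ℝ (E σ) y :=
  DifferentiableAt.of_uncurry (h.differentiable_E _)

lemma differentiableAt_B (h : IsCharacteristicFlow m c E B X P) (σ : ℝ) (y : Fin 3 → ℝ) :
    DifferentiableAt ℝ (B σ) y :=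
  DifferentiableAt.of_uncurry (h.differentiable_B _)

lemma hasDerivAt_fderiv_X (h : IsCharacteristicFlow m c E B X P) (hmc : 0 < m * c) (p v : Fin 3 → ℝ)
    (σ : ℝ) :
    HasDerivAt (fun s => fderiv ℝ (X s) p v) (c • dBeta m c (P σ p) (fderiv ℝ (P σ) p v)) σ := by
  have hg : Differentiable ℝ (fun z : ℝ × (Fin 3 → ℝ) => c • beta m c (P z.1 z.2)) :=
    ((differentiable_beta hmc).comp (h.contDiff_P.differentiable two_ne_zero)).const_smul c
  have hline : HasDerivAt (fun r : ℝ => c • beta m c (P σ (p + r • v)))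
      (c • dBeta m c (P σ p) (fderiv ℝ (P σ) p v)) 0 := by
    have := (hasDerivAt_beta hmc
      ((h.differentiableAt_P σ p).hasFDerivAt.hasLineDerivAt v)).const_smul c
    simp only [zero_smul, add_zero] at this
    exact this
  rw [← fderiv_apply_eq_of_hasDerivAt_line
    (DifferentiableAt.of_uncurry (f := fun s q => c • beta m c (P s q)) (hg _)) hline]
  exact hasDerivAt_fderiv_of_hasDerivAt h.contDiff_X hg h.hasDerivAt_X σ p v

lemma hasDerivAt_fderiv_P (h : IsCharacteristicFlow m c E B X P) (hmc : 0 < m * c) (p v : Fin 3 → ℝ)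
    (σ : ℝ) :
    HasDerivAt (fun s => fderiv ℝ (P s) p v)
      (lorentzForceDeriv m c E B σ (X σ p) (P σ p) (fderiv ℝ (X σ) p v) (fderiv ℝ (P σ) p v))
      σ := by
  have hX := h.contDiff_X.differentiable two_ne_zero
  have hP := h.contDiff_P.differentiable two_ne_zero
  have hg : Differentiable ℝ
      (fun z : ℝ × (Fin 3 → ℝ) => lorentzForce m c E B z.1 (X z.1 z.2) (P z.1 z.2)) :=
    (h.differentiable_E.comp (differentiable_fst.prodMk hX)).neg.sub
      (((differentiable_beta hmc).comp hP).crossProduct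
        (h.differentiable_B.comp (differentiable_fst.prodMk hX)))
  have hline : HasDerivAt (fun r : ℝ => lorentzForce m c E B σ (X σ (p + r • v)) (P σ (p + r • v)))
      (lorentzForceDeriv m c E B σ (X σ p) (P σ p) (fderiv ℝ (X σ) p v) (fderiv ℝ (P σ) p v))
      0 := by
    have := HasDerivAt.lorentzForce hmc (h.differentiableAt_E σ _) (h.differentiableAt_B σ _)
      ((h.differentiableAt_X σ p).hasFDerivAt.hasLineDerivAt v)
      ((h.differentiableAt_P σ p).hasFDerivAt.hasLineDerivAt v)
    simp only [zero_smul, add_zero] at this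
    exact this
  rw [← fderiv_apply_eq_of_hasDerivAt_line (DifferentiableAt.of_uncurry
    (f := fun s q => lorentzForce m c E B s (X s q) (P s q)) (hg _)) hline]
  exact hasDerivAt_fderiv_of_hasDerivAt h.contDiff_P hg h.hasDerivAt_P σ p v

lemma deriv_deriv_fderiv_apply (h : IsCharacteristicFlow m c E B X P) (hmc : 0 < m * c)
    (p v : Fin 3 → ℝ) (τ : ℝ) (j : Fin 3) :
    deriv (deriv (fun σ => fderiv ℝ (fun q => X σ q j) p v)) τ
      = (c • (dBeta m c (P τ p) (lorentzForceDeriv m c E B τ (X τ p) (P τ p)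
            (fderiv ℝ (X τ) p v) (fderiv ℝ (P τ) p v))
          + d2Beta m c (P τ p) (lorentzForce m c E B τ (X τ p) (P τ p))
            (fderiv ℝ (P τ) p v))) j := by
  have hcomp : (fun σ => fderiv ℝ (fun q => X σ q j) p v) = fun σ => fderiv ℝ (X σ) p v j :=
    funext fun σ => by rw [fderiv_apply (h.differentiableAt_X σ p) j]; rfl
  have hderiv : deriv (fun σ => fderiv ℝ (X σ) p v j)
      = fun σ => c * dBeta m c (P σ p) (fderiv ℝ (P σ) p v) j :=
    funext fun σ => (hasDerivAt_pi.1 (h.hasDerivAt_fderiv_X hmc p v σ) j).deriv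
  rw [hcomp, hderiv]
  exact (hasDerivAt_pi.1 ((hasDerivAt_dBeta hmc (h.hasDerivAt_P τ p)
    (h.hasDerivAt_fderiv_P hmc p v τ)).const_smul c) j).deriv

end IsCharacteristicFlow

-- `‖·‖` on `Fin 3 → ℝ` is the sup norm, so partial derivatives bounded by `K` give `3 * K`.
structure FieldBounds (K : ℝ) (E B : ℝ → (Fin 3 → ℝ) → Fin 3 → ℝ) : Prop where
  norm_E_le : ∀ s y, ‖E s y‖ ≤ K
  norm_B_le : ∀ s y, ‖B s y‖ ≤ K
  norm_fderiv_E_le : ∀ s y w, ‖fderiv ℝ (E s) y w‖ ≤ 3 * K * ‖w‖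
  norm_fderiv_B_le : ∀ s y w, ‖fderiv ℝ (B s) y w‖ ≤ 3 * K * ‖w‖

lemma FieldBounds.of_abs_le {K : ℝ} {E B : ℝ → (Fin 3 → ℝ) → Fin 3 → ℝ} (hK : 0 ≤ K)
    (hE : ContDiff ℝ 1 (fun z : ℝ × (Fin 3 → ℝ) => E z.1 z.2))
    (hB : ContDiff ℝ 1 (fun z : ℝ × (Fin 3 → ℝ) => B z.1 z.2))
    (hEb : ∀ s y i, |E s y i| ≤ K) (hBb : ∀ s y i, |B s y i| ≤ K)
    (hE' : ∀ s y i j, |fderiv ℝ (fun y' => E s y' i) y (Pi.single j 1)| ≤ K)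
    (hB' : ∀ s y i j, |fderiv ℝ (fun y' => B s y' i) y (Pi.single j 1)| ≤ K) :
    FieldBounds K E B where
  norm_E_le s y := norm_pi_le_of_forall_abs_le hK (hEb s y)
  norm_B_le s y := norm_pi_le_of_forall_abs_le hK (hBb s y)
  norm_fderiv_E_le s y w := by
    simpa using norm_fderiv_apply_le_of_abs_partial_le hK
      (DifferentiableAt.of_uncurry (hE.differentiable one_ne_zero _)) (hE' s y) w
  norm_fderiv_B_le s y w := by
    simpa using norm_fderiv_apply_le_of_abs_partial_le hK
      (DifferentiableAt.of_uncurry (hB.differentiable one_ne_zero _)) (hB' s y) w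

namespace FieldBounds

variable {m c K : ℝ} {E B : ℝ → (Fin 3 → ℝ) → Fin 3 → ℝ}

lemma nonneg (hF : FieldBounds K E B) : 0 ≤ K :=
  (norm_nonneg _).trans (hF.norm_E_le 0 0)

lemma norm_linearization_le (hF : FieldBounds K E B) (hm : 0 < m) (hc : 0 < c) (s : ℝ)
    (x q y z : Fin 3 → ℝ) :
    ‖(c • dBeta m c q z, lorentzForceDeriv m c E B s x q y z)‖
      ≤ (4 / m + 9 * K + 8 * K / (m * c)) * ‖(y, z)‖ := by
  have hmc := mul_pos hm hc
  have hK := hF.nonneg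
  have hy : ‖y‖ ≤ ‖(y, z)‖ := norm_fst_le (y, z)
  have hz : ‖z‖ ≤ ‖(y, z)‖ := norm_snd_le (y, z)
  have hs : (p0 m c q)⁻¹ ≤ (m * c)⁻¹ := inv_p0_le hmc q
  have hs0 : 0 ≤ (p0 m c q)⁻¹ := inv_nonneg.2 (p0_pos hmc q).le
  have h1 : ‖c • dBeta m c q z‖ ≤ 4 / m * ‖(y, z)‖ :=
    calc ‖c • dBeta m c q z‖ ≤ c * (4 * (p0 m c q)⁻¹ * ‖z‖) := by
          rw [norm_smul, Real.norm_of_nonneg hc.le]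
          gcongr
          exact norm_dBeta_le hmc q z
      _ ≤ c * (4 * (m * c)⁻¹ * ‖(y, z)‖) := by gcongr
      _ = 4 / m * ‖(y, z)‖ := by field_simp
  have h2 : ‖lorentzForceDeriv m c E B s x q y z‖ ≤ (9 * K + 8 * K / (m * c)) * ‖(y, z)‖ :=
    calc ‖lorentzForceDeriv m c E B s x q y z‖
        ≤ 3 * (3 * K) * ‖y‖ + 8 * K * (p0 m c q)⁻¹ * ‖z‖ :=
          norm_lorentzForceDeriv_le hmc (hF.norm_B_le s x) (hF.norm_fderiv_E_le s x y)
            (hF.norm_fderiv_B_le s x y)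
      _ ≤ 3 * (3 * K) * ‖(y, z)‖ + 8 * K * (m * c)⁻¹ * ‖(y, z)‖ := by gcongr
      _ = (9 * K + 8 * K / (m * c)) * ‖(y, z)‖ := by ring
  have h4m : 0 ≤ 4 / m := by positivity
  have h8K : 0 ≤ 9 * K + 8 * K / (m * c) := by positivity
  refine norm_prod_le_iff.2 ⟨h1.trans ?_, h2.trans ?_⟩ <;> gcongr <;> linarith

lemma norm_deriv_linearization_le (hF : FieldBounds K E B) (hmc : 0 < m * c) (hc : 0 ≤ c)
    (s : ℝ) (x q y z : Fin 3 → ℝ) :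
    ‖c • (dBeta m c q (lorentzForceDeriv m c E B s x q y z)
        + d2Beta m c q (lorentzForce m c E B s x q) z)‖
      ≤ c * K * (36 * (p0 m c q)⁻¹ * ‖y‖ + 140 * (p0 m c q)⁻¹ ^ 2 * ‖z‖) := by
  have hs0 : 0 ≤ (p0 m c q)⁻¹ := inv_nonneg.2 (p0_pos hmc q).le
  have hK := hF.nonneg
  have hforce := norm_lorentzForce_le hmc (hF.norm_E_le s x) (hF.norm_B_le s x) (q := q)
  have hforce' := norm_lorentzForceDeriv_le hmc (hF.norm_B_le s x) (hF.norm_fderiv_E_le s x y)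
    (hF.norm_fderiv_B_le s x y) (q := q) (z := z)
  calc ‖c • (dBeta m c q (lorentzForceDeriv m c E B s x q y z)
        + d2Beta m c q (lorentzForce m c E B s x q) z)‖
      ≤ c * (4 * (p0 m c q)⁻¹ * ‖lorentzForceDeriv m c E B s x q y z‖
          + 36 * (p0 m c q)⁻¹ ^ 2 * (‖lorentzForce m c E B s x q‖ * ‖z‖)) := by
        rw [norm_smul, Real.norm_of_nonneg hc]
        gcongr
        exact (norm_add_le _ _).trans
          (add_le_add (norm_dBeta_le hmc _ _) (norm_d2Beta_le hmc _ _ _))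
    _ ≤ c * (4 * (p0 m c q)⁻¹ * (3 * (3 * K) * ‖y‖ + 8 * K * (p0 m c q)⁻¹ * ‖z‖)
          + 36 * (p0 m c q)⁻¹ ^ 2 * (3 * K * ‖z‖)) := by
        gcongr
    _ = c * K * (36 * (p0 m c q)⁻¹ * ‖y‖ + 140 * (p0 m c q)⁻¹ ^ 2 * ‖z‖) := by ring

end FieldBounds

namespace IsCharacteristicFlow

variable {m c K t : ℝ} {E B X P : ℝ → (Fin 3 → ℝ) → Fin 3 → ℝ} {x : Fin 3 → ℝ}

lemma norm_fderiv_prod_le (h : IsCharacteristicFlow m c E B X P) (hF : FieldBounds K E B)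
    (hm : 0 < m) (hc : 0 < c) (hXt : ∀ q, X t q = x) (hPt : ∀ q, P t q = q)
    (p v : Fin 3 → ℝ) (σ : ℝ) :
    ‖(fderiv ℝ (X σ) p v, fderiv ℝ (P σ) p v)‖
      ≤ ‖v‖ * Real.exp ((4 / m + 9 * K + 8 * K / (m * c)) * |σ - t|) := by
  have hmc := mul_pos hm hc
  have hV : ∀ σ, HasDerivAt (fun σ => (fderiv ℝ (X σ) p v, fderiv ℝ (P σ) p v))
      (c • dBeta m c (P σ p) (fderiv ℝ (P σ) p v),
        lorentzForceDeriv m c E B σ (X σ p) (P σ p) (fderiv ℝ (X σ) p v) (fderiv ℝ (P σ) p v))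
      σ := fun σ => (h.hasDerivAt_fderiv_X hmc p v σ).prodMk (h.hasDerivAt_fderiv_P hmc p v σ)
  have hb := fun σ => hF.norm_linearization_le hm hc σ (X σ p) (P σ p) (fderiv ℝ (X σ) p v)
    (fderiv ℝ (P σ) p v)
  have hinit : (fderiv ℝ (X t) p v, fderiv ℝ (P t) p v) = (0, v) := by
    rw [show X t = fun _ => x from funext hXt, show P t = id from funext hPt]
    simp
  have hv : ‖((0 : Fin 3 → ℝ), v)‖ = ‖v‖ := by simp [Prod.norm_def]
  simpa only [hinit, hv] using norm_le_mul_exp_of_norm_deriv_le hV hb t σ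

lemma norm_P_sub_le (h : IsCharacteristicFlow m c E B X P) (hF : FieldBounds K E B)
    (hmc : 0 < m * c) (hPt : ∀ q, P t q = q) (p : Fin 3 → ℝ) (σ : ℝ) :
    ‖P σ p - p‖ ≤ 3 * K * |σ - t| := by
  simpa [hPt] using norm_sub_le_of_norm_deriv_le (t := t) (τ := σ) (fun σ => h.hasDerivAt_P σ p)
    fun σ _ => norm_lorentzForce_le hmc (hF.norm_E_le _ _) (hF.norm_B_le _ _)

lemma inv_p0_P_le_two_mul (h : IsCharacteristicFlow m c E B X P) (hF : FieldBounds K E B)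
    (hmc : 0 < m * c) (hPt : ∀ q, P t q = q) (p : Fin 3 → ℝ) {σ : ℝ}
    (hσ : 3 * K * |σ - t| ≤ m * c / 8) :
    (p0 m c (P σ p))⁻¹ ≤ 2 * (p0 m c p)⁻¹ :=
  inv_p0_le_two_mul_inv_p0 hmc ((h.norm_P_sub_le hF hmc hPt p σ).trans hσ)

lemma norm_fderiv_X_le (h : IsCharacteristicFlow m c E B X P) (hF : FieldBounds K E B) (hm : 0 < m)
    (hc : 0 < c) (hXt : ∀ q, X t q = x) (hPt : ∀ q, P t q = q) (p v : Fin 3 → ℝ) {τ : ℝ}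
    (hτ : 3 * K * |τ - t| ≤ m * c / 8) :
    ‖fderiv ℝ (X τ) p v‖ ≤ 8 * c * (p0 m c p)⁻¹
      * (‖v‖ * Real.exp ((4 / m + 9 * K + 8 * K / (m * c)) * |τ - t|)) * |τ - t| := by
  have hmc := mul_pos hm hc
  have hK := hF.nonneg
  have hbound : ∀ σ ∈ Set.uIcc t τ, ‖c • dBeta m c (P σ p) (fderiv ℝ (P σ) p v)‖
      ≤ 8 * c * (p0 m c p)⁻¹ * (‖v‖ * Real.exp ((4 / m + 9 * K + 8 * K / (m * c)) * |τ - t|)) := by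
    intro σ hσ
    have hσt : |σ - t| ≤ |τ - t| := Set.abs_sub_left_of_mem_uIcc hσ
    have hwin := h.inv_p0_P_le_two_mul hF hmc hPt p (σ := σ) (by nlinarith)
    have hZ : ‖fderiv ℝ (P σ) p v‖
        ≤ ‖v‖ * Real.exp ((4 / m + 9 * K + 8 * K / (m * c)) * |τ - t|) := by
      refine (norm_snd_le _).trans ((h.norm_fderiv_prod_le hF hm hc hXt hPt p v σ).trans ?_)
      gcongr
    calc ‖c • dBeta m c (P σ p) (fderiv ℝ (P σ) p v)‖
        ≤ c * (4 * (p0 m c (P σ p))⁻¹ * ‖fderiv ℝ (P σ) p v‖) := by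
          rw [norm_smul, Real.norm_of_nonneg hc.le]
          gcongr
          exact norm_dBeta_le hmc _ _
      _ ≤ c * (4 * (2 * (p0 m c p)⁻¹)
            * (‖v‖ * Real.exp ((4 / m + 9 * K + 8 * K / (m * c)) * |τ - t|))) := by
          have := p0_pos hmc p
          gcongr
      _ = _ := by ring
  have hXt' : fderiv ℝ (X t) p v = 0 := by
    rw [show X t = fun _ => x from funext hXt]
    simp
  simpa [hXt'] using norm_sub_le_of_norm_deriv_le (h.hasDerivAt_fderiv_X hmc p v) hbound

lemma abs_deriv_deriv_fderiv_apply_le (h : IsCharacteristicFlow m c E B X P)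
    (hF : FieldBounds K E B) (hm : 0 < m) (hc : 0 < c) (hK : 0 < K) (hXt : ∀ q, X t q = x)
    (hPt : ∀ q, P t q = q) (p v : Fin 3 → ℝ) {τ : ℝ} (hτ : |τ - t| ≤ m * c / (24 * K)) (j : Fin 3) :
    |deriv (deriv (fun σ => fderiv ℝ (fun q => X σ q j) p v)) τ|
      ≤ (24 * m * c ^ 2 + 560 * K)
          * Real.exp ((4 / m + 9 * K + 8 * K / (m * c)) * (m * c / (24 * K)))
          * c * ‖v‖ / p0 m c p ^ 2 := by
  have hmc := mul_pos hm hc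
  rw [h.deriv_deriv_fderiv_apply hmc p v τ j]
  set L := 4 / m + 9 * K + 8 * K / (m * c)
  set T := m * c / (24 * K)
  set M := Real.exp (L * T)
  set Y := fderiv ℝ (X τ) p v
  set Z := fderiv ℝ (P τ) p v
  set s := (p0 m c (P τ p))⁻¹
  set sp := (p0 m c p)⁻¹
  have hL : 0 ≤ L := by positivity
  have hs0 : 0 ≤ s := inv_nonneg.2 (p0_pos hmc _).le
  have hsp : 0 < sp := inv_pos.2 (p0_pos hmc _)
  have hwindow : 3 * K * |τ - t| ≤ m * c / 8 :=
    calc 3 * K * |τ - t| ≤ 3 * K * T := by gcongr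
      _ = m * c / 8 := by simp only [T]; field_simp; ring
  have hexp : Real.exp (L * |τ - t|) ≤ M := Real.exp_le_exp.2 (by gcongr)
  have hZ : ‖Z‖ ≤ ‖v‖ * M :=
    (norm_snd_le _).trans ((h.norm_fderiv_prod_le hF hm hc hXt hPt p v τ).trans (by gcongr))
  have hY : ‖Y‖ ≤ 8 * c * sp * (‖v‖ * M) * T :=
    (h.norm_fderiv_X_le hF hm hc hXt hPt p v hwindow).trans (by gcongr)
  have hs : s ≤ 2 * sp := h.inv_p0_P_le_two_mul hF hmc hPt p hwindow
  calc |(c • (dBeta m c (P τ p) (lorentzForceDeriv m c E B τ (X τ p) (P τ p) Y Z)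
          + d2Beta m c (P τ p) (lorentzForce m c E B τ (X τ p) (P τ p)) Z)) j|
      ≤ c * K * (36 * s * ‖Y‖ + 140 * s ^ 2 * ‖Z‖) :=
        (abs_le_norm_pi _ j).trans (hF.norm_deriv_linearization_le hmc hc.le τ _ _ _ _)
    _ ≤ c * K * (36 * (2 * sp) * (8 * c * sp * (‖v‖ * M) * T)
          + 140 * (2 * sp) ^ 2 * (‖v‖ * M)) := by
        gcongr
    _ = (24 * m * c ^ 2 + 560 * K) * M * c * ‖v‖ * sp ^ 2 := by
        simp only [T]
        field_simp
        ring
    _ = (24 * m * c ^ 2 + 560 * K) * M * c * ‖v‖ / p0 m c p ^ 2 := by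
        rw [inv_pow, div_eq_mul_inv]

end IsCharacteristicFlow

/-- There exist `T̄, C > 0` depending only on `m, c, K` such that, for any `C¹`
electromagnetic fields bounded (together with their spatial gradients) by `K`,
and any jointly smooth solution `(X, P)` (C² in `(τ,p)`, with `d²/dτ² ∂_p X`
continuous) of the relativistic characteristic system with data
`X(t;t,x,p) = x`, `P(t;t,x,p) = p`, one has
`|d²/dτ² ∂_{p_i} X_j(τ;t,x,p)| ≤ C c / (p⁰)²` for `|τ − t| ≤ T̄`. -/
theorem stmt18 (m c K : ℝ) (hm : 0 < m) (hc : 0 < c) (hK : 0 < K) :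
    ∃ Tbar C : ℝ, 0 < Tbar ∧ 0 < C ∧
      ∀ (E B : ℝ → (Fin 3 → ℝ) → Fin 3 → ℝ),
        ContDiff ℝ 1 (fun z : ℝ × (Fin 3 → ℝ) => E z.1 z.2) →
        ContDiff ℝ 1 (fun z : ℝ × (Fin 3 → ℝ) => B z.1 z.2) →
        (∀ s y i, |E s y i| ≤ K) →
        (∀ s y i, |B s y i| ≤ K) →
        (∀ s y i j, |fderiv ℝ (fun y' => E s y' i) y (Pi.single j 1)| ≤ K) →
        (∀ s y i j, |fderiv ℝ (fun y' => B s y' i) y (Pi.single j 1)| ≤ K) →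
        ∀ (t : ℝ), 0 ≤ t → ∀ (x : Fin 3 → ℝ),
        ∀ (X P : ℝ → (Fin 3 → ℝ) → Fin 3 → ℝ),
          ContDiff ℝ 2 (fun z : ℝ × (Fin 3 → ℝ) => X z.1 z.2) →
          ContDiff ℝ 2 (fun z : ℝ × (Fin 3 → ℝ) => P z.1 z.2) →
          (∀ p i j, ContDiff ℝ 2
            (fun σ => fderiv ℝ (fun q => X σ q j) p (Pi.single i 1))) →
          (∀ p, X t p = x) → (∀ p, P t p = p) →
          (∀ τ p, HasDerivAt (fun σ => X σ p)
              ((c / Real.sqrt (m ^ 2 * c ^ 2 + dot3 (P τ p) (P τ p))) • P τ p) τ) →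
          (∀ τ p, HasDerivAt (fun σ => P σ p)
              (-(E τ (X τ p)) -
                crossProduct
                  ((Real.sqrt (m ^ 2 * c ^ 2 + dot3 (P τ p) (P τ p)))⁻¹ • P τ p)
                  (B τ (X τ p))) τ) →
          ∀ τ, |τ - t| ≤ Tbar → ∀ (p : Fin 3 → ℝ) (i j : Fin 3),
            |deriv (deriv (fun σ => fderiv ℝ (fun q => X σ q j) p (Pi.single i 1))) τ|
              ≤ C * c / (Real.sqrt (m ^ 2 * c ^ 2 + dot3 p p)) ^ 2 := by
  refine ⟨m * c / (24 * K), (24 * m * c ^ 2 + 560 * K)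
    * Real.exp ((4 / m + 9 * K + 8 * K / (m * c)) * (m * c / (24 * K))), by positivity,
    by positivity, ?_⟩
  intro E B hE hB hEb hBb hE' hB' t _ x X P hX hP _ hXt hPt hXode hPode τ hτ p i j
  have hflow : IsCharacteristicFlow m c E B X P :=
    { differentiable_E := hE.differentiable one_ne_zero
      differentiable_B := hB.differentiable one_ne_zero
      contDiff_X := hX
      contDiff_P := hP
      hasDerivAt_X := fun τ q =>
        (hXode τ q).congr_deriv (by rw [beta, smul_smul, div_eq_mul_inv]; rfl)
      hasDerivAt_P := hPode }
  have hF := FieldBounds.of_abs_le hK.le hE hB hEb hBb hE' hB'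
  have := hflow.abs_deriv_deriv_fderiv_apply_le hF hm hc hK hXt hPt p (Pi.single i 1) hτ j
  rwa [Pi.norm_single, norm_one, mul_one] at this
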